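/- arXiv:2003.02832 — 3 statements merged into one kernel-verified Lean document; each statement's English description precedes it below -/
import Mathlib

section
/- Let C be a reduced, finitely generated free chain complex over R = F[U,V] (F = Z/2Z) with basis {x_1, ..., x_n}, bigraded so that multiplication by U lowers Alexander grading by 1, multiplication by V raises it by 1, and ∂ preserves Alexander grading. Suppose ∂x_3 = U x_1 + V Σ_{j∈J₁} U^{ℓ_j} V^{m_j} x_{i_j} and ∂x_1 = V x_2 + U Σ_{j∈J₂} U^{p_j} V^{q_j} x_{i_j} with x_2 not appearing in the sums. Then ∂² x_3 = 0 forces q_j ≥ 1 for all j ∈ J₂, and there exists j' ∈ J₁ with ℓ_{j'} ≤ 1 and m_{j'} = 0. -/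
/- STATEMENT 8: Key computation in the proof that a slice knot of torsion order 1 has a
unit box summand.  `C` is a reduced finitely generated free chain complex over
`R = F[U,V]` (`F = ℤ/2ℤ`) with basis `{x_i}` (modeled as `ι → R` with the standard
basis).  Suppose `∂x₃ = U x₁ + V ∑_{j∈J₁} U^{ℓ_j} V^{m_j} x_{i_j}` and
`∂x₁ = V x₂ + U ∑_{j∈J₂} U^{p_j} V^{q_j} x_{i_j}`, with `x₂` not appearing in the sums.
Then `∂² x₃ = 0` forces `q_j ≥ 1` for all `j ∈ J₂`, and there exists `j' ∈ J₁` with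
`ℓ_{j'} ≤ 1` and `m_{j'} = 0`. -/

noncomputable abbrev R2 : Type := MvPolynomial (Fin 2) (ZMod 2)
noncomputable abbrev UU : R2 := MvPolynomial.X 0
noncomputable abbrev VV : R2 := MvPolynomial.X 1

/-- Standard basis of the free module `ι → R`. -/
noncomputable def e {ι : Type*} [DecidableEq ι] (i : ι) : ι → R2 := Pi.single i 1

theorem unit_box_exponent_constraints
    {ι : Type*} [Fintype ι] [DecidableEq ι]
    (D : (ι → R2) →ₗ[R2] (ι → R2)) (hD2 : D.comp D = 0)
    (hreduced : ∀ i : ι, D (e i) ∈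
      LinearMap.range (LinearMap.lsmul R2 (ι → R2) UU) ⊔
      LinearMap.range (LinearMap.lsmul R2 (ι → R2) VV))
    (i1 i2 i3 : ι) (hne12 : i1 ≠ i2) (hne13 : i1 ≠ i3) (hne23 : i2 ≠ i3)
    (J₁ J₂ : Finset ι) (ℓ m p q : ι → ℕ)
    (hx2J₁ : i2 ∉ J₁) (hx2J₂ : i2 ∉ J₂)
    (h3 : D (e i3) = UU • e i1 + VV • ∑ i ∈ J₁, (UU ^ ℓ i * VV ^ m i) • e i)
    (h1 : D (e i1) = VV • e i2 + UU • ∑ i ∈ J₂, (UU ^ p i * VV ^ q i) • e i) :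
    (∀ i ∈ J₂, 1 ≤ q i) ∧ ∃ i ∈ J₁, ℓ i ≤ 1 ∧ m i = 0 := by
  have h0 : UU • D (e i1) + VV • ∑ j ∈ J₁, (UU ^ ℓ j * VV ^ m j) • D (e j) = 0 := by
    have h := LinearMap.congr_fun hD2 (e i3)
    simp only [LinearMap.comp_apply, LinearMap.zero_apply] at h
    rw [h3] at h
    simpa [map_add, map_smul, map_sum] using h
  have key : ∀ k, UU * (D (e i1) k) + VV * ∑ j ∈ J₁, (UU ^ ℓ j * VV ^ m j) * (D (e j) k) = 0 := by
    intro k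
    have h := congrFun h0 k
    simpa [Finset.sum_apply, Finset.mul_sum] using h
  have hD1 : ∀ k, D (e i1) k =
      VV * (if k = i2 then 1 else 0) + UU * (if k ∈ J₂ then UU ^ p k * VV ^ q k else 0) := by
    intro k
    rw [h1]
    simp only [Pi.add_apply, Pi.smul_apply, Finset.sum_apply, smul_eq_mul, e, Pi.single_apply]
    congr 1
    · simp [Finset.sum_ite_eq J₂ k]
  constructor
  · intro k hk
    by_contra hq
    have hq0 : q k = 0 := by omega
    have hkey := key k
    rw [hD1 k, if_neg (fun h : k = i2 => hx2J₂ (h ▸ hk)), if_pos hk, hq0] at hkey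
    have := congrArg (MvPolynomial.eval (fun i : Fin 2 => if i = 1 then (0 : ZMod 2) else 1)) hkey
    simp [UU, VV] at this
  · by_contra hno
    push_neg at hno
    have hkey := key i2
    rw [hD1 i2, if_pos rfl, if_neg hx2J₂] at hkey
    -- hkey : UU * (VV * 1 + UU * 0) + VV * S = 0
    have hkey2 : VV * (UU + ∑ j ∈ J₁, (UU ^ ℓ j * VV ^ m j) * (D (e j) i2)) = 0 := by
      rw [mul_add]; rw [← hkey]; ring
    have hV : (VV : R2) ≠ 0 := MvPolynomial.X_ne_zero 1
    have hsum : UU + ∑ j ∈ J₁, (UU ^ ℓ j * VV ^ m j) * (D (e j) i2) = 0 :=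
      (mul_eq_zero.mp hkey2).resolve_left hV
    have hc := congrArg (MvPolynomial.coeff (Finsupp.single (0 : Fin 2) 1)) hsum
    rw [MvPolynomial.coeff_add, MvPolynomial.coeff_sum] at hc
    have hUc : MvPolynomial.coeff (Finsupp.single (0 : Fin 2) 1) UU = 1 := by
      simp [UU]
    have hterm : ∀ j ∈ J₁, MvPolynomial.coeff (Finsupp.single (0 : Fin 2) 1)
        ((UU ^ ℓ j * VV ^ m j) * (D (e j) i2)) = 0 := by
      intro j hj
      have hmono : (UU : R2) ^ ℓ j * VV ^ m j
          = MvPolynomial.monomial (Finsupp.single (0 : Fin 2) (ℓ j) + Finsupp.single 1 (m j)) 1 := by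
        rw [MvPolynomial.X_pow_eq_monomial, MvPolynomial.X_pow_eq_monomial,
          MvPolynomial.monomial_mul, one_mul]
      rw [hmono, MvPolynomial.coeff_monomial_mul']
      rw [if_neg]
      intro hle
      have h2 := hno j hj
      rcases Nat.lt_or_ge (ℓ j) 2 with h|h
      · have hm : 1 ≤ m j := by
          have := h2 (by omega)
          omega
        have := hle 1
        simp [Finsupp.single_apply] at this
        omega
      · have := hle 0
        simp [Finsupp.single_apply] at this
        omega
    rw [Finset.sum_congr rfl hterm, hUc] at hc
    simp at hc
end

section
/- Let C = F[U,V] ⊕ A be a chain complex over R = F[U,V] (F = Z/2Z), where F[U,V] is a summand with zero differential and A is a direct sum of n ≥ 1 unit boxes. Then H_*(C/(V=0)) ≅ F[U] ⊕ (F[U]/U)^{2n} as F[U]-modules, and consequently Ord_U(H_*(C/(V=0))) = 1. -/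
/-- The underlying module of `C = R ⊕ (n unit boxes)`. -/
noncomputable abbrev Cmod (n : ℕ) : Type := R2 × ((Fin n × Fin 4) → R2)

/-- The generator of the free summand `R`. -/
noncomputable def ef {n : ℕ} : Cmod n := ((1 : R2), 0)

/-- The `i`-th generator (`a, b, c, d` for `i = 0, 1, 2, 3`) of the `k`-th unit box. -/
noncomputable def eb {n : ℕ} (k : Fin n) (i : Fin 4) : Cmod n := (0, Pi.single (k, i) 1)

/-- The submodule `V·C`. -/
noncomputable def VC (C : Type*) [AddCommGroup C] [Module R2 C] : Submodule R2 C :=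
  LinearMap.range (LinearMap.lsmul R2 C VV)

lemma VC_le_comap {C : Type*} [AddCommGroup C] [Module R2 C] (D : C →ₗ[R2] C) :
    VC C ≤ (VC C).comap D := by
  rintro _ ⟨m, rfl⟩
  exact ⟨D m, by simp [map_smul]⟩

/-- The induced differential on the quotient complex `C/(V=0) = C/(V·C)`. -/
noncomputable def Dbar {C : Type*} [AddCommGroup C] [Module R2 C] (D : C →ₗ[R2] C) :
    (C ⧸ VC C) →ₗ[R2] (C ⧸ VC C) :=
  Submodule.mapQ (VC C) (VC C) D (VC_le_comap D)

/-- Homology of a module with an endomorphism `d`. -/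
noncomputable def Hml {R M : Type*} [CommRing R] [AddCommGroup M] [Module R M]
    (d : M →ₗ[R] M) : Type _ :=
  LinearMap.ker d ⧸ (LinearMap.range d).comap (LinearMap.ker d).subtype

noncomputable instance {R M : Type*} [CommRing R] [AddCommGroup M] [Module R M]
    (d : M →ₗ[R] M) : AddCommGroup (Hml d) :=
  inferInstanceAs (AddCommGroup
    (LinearMap.ker d ⧸ (LinearMap.range d).comap (LinearMap.ker d).subtype))

noncomputable instance {R M : Type*} [CommRing R] [AddCommGroup M] [Module R M]
    (d : M →ₗ[R] M) : Module R (Hml d) :=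
  inferInstanceAs (Module R
    (LinearMap.ker d ⧸ (LinearMap.range d).comap (LinearMap.ker d).subtype))

/-- The `U`-torsion order of an `R = F[U,V]`-module, valued in `ℕ∞`. -/
noncomputable def OrdU (M : Type*) [AddCommGroup M] [Module R2 M] : ℕ∞ :=
  sInf ((fun k : ℕ => (k : ℕ∞)) ''
    {k : ℕ | ∀ m : M, (∃ j : ℕ, UU ^ j • m = 0) → UU ^ k • m = 0})

/-! Setting `V = 0` turns each box into `a ↦ U b`, `c ↦ U d`. As `U` is not a zero divisor
modulo `V`, a cycle has its `a`- and `c`-coefficients in `(V)`, and it is a boundary exactly when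
its free coefficient lies in `(V)` and its `b`- and `d`-coefficients lie in `(U, V)`. So reading
off these coefficients identifies the homology with `R/(V) ⊕ (R/(U,V))^{2n}`, whose `U`-torsion,
the `2n ≥ 1` copies of `R/(U,V)`, is killed by `U` but not by `1`. -/

noncomputable def Hml.equivOfSurjective {R M N : Type*} [CommRing R] [AddCommGroup M]
    [Module R M] [AddCommGroup N] [Module R N] (d : M →ₗ[R] M) (φ : LinearMap.ker d →ₗ[R] N)
    (hφ : Function.Surjective φ)
    (hker : LinearMap.ker φ = (LinearMap.range d).comap (LinearMap.ker d).subtype) :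
    Hml d ≃ₗ[R] N :=
  (Submodule.quotEquivOfEq _ _ hker.symm).trans (φ.quotKerEquivOfSurjective hφ)

section ReadOff

variable {C N : Type*} [AddCommGroup C] [Module R2 C] [AddCommGroup N] [Module R2 N]

lemma Dbar_mk (D : C →ₗ[R2] C) (x : C) :
    Dbar D (Submodule.Quotient.mk x) = Submodule.Quotient.mk (D x) :=
  rfl

lemma mk_mem_ker_Dbar_iff (D : C →ₗ[R2] C) (x : C) :
    Submodule.Quotient.mk x ∈ LinearMap.ker (Dbar D) ↔ D x ∈ VC C := by
  rw [LinearMap.mem_ker, Dbar_mk, Submodule.Quotient.mk_eq_zero]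

variable (D : C →ₗ[R2] C) (Φ : C →ₗ[R2] N) (hΦ : VC C ≤ LinearMap.ker Φ)

noncomputable def cycleReadOff : LinearMap.ker (Dbar D) →ₗ[R2] N :=
  (VC C).liftQ Φ hΦ ∘ₗ (LinearMap.ker (Dbar D)).subtype

lemma cycleReadOff_surjective (h : ∀ t : N, ∃ x : C, D x ∈ VC C ∧ Φ x = t) :
    Function.Surjective (cycleReadOff D Φ hΦ) := by
  intro t
  obtain ⟨x, hx, rfl⟩ := h t
  exact ⟨⟨Submodule.Quotient.mk x, (mk_mem_ker_Dbar_iff D x).2 hx⟩, rfl⟩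

lemma ker_cycleReadOff (hΦD : Φ ∘ₗ D = 0)
    (h : ∀ x : C, D x ∈ VC C → Φ x = 0 → ∃ z, D z - x ∈ VC C) :
    LinearMap.ker (cycleReadOff D Φ hΦ) =
      (LinearMap.range (Dbar D)).comap (LinearMap.ker (Dbar D)).subtype := by
  ext ⟨y, hy⟩
  obtain ⟨x, rfl⟩ := Submodule.Quotient.mk_surjective _ y
  simp only [LinearMap.mem_ker, Submodule.mem_comap, Submodule.coe_subtype, LinearMap.mem_range]
  constructor
  · intro hx
    obtain ⟨z, hz⟩ := h x ((mk_mem_ker_Dbar_iff D x).1 hy) hx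
    exact ⟨Submodule.Quotient.mk z, (Submodule.Quotient.eq _).2 hz⟩
  · rintro ⟨z', hz⟩
    obtain ⟨z, rfl⟩ := Submodule.Quotient.mk_surjective _ z'
    change (VC C).liftQ Φ hΦ (Submodule.Quotient.mk x) = 0
    rw [← hz, Dbar_mk, Submodule.liftQ_apply, ← LinearMap.comp_apply, hΦD, LinearMap.zero_apply]

end ReadOff

section OrdU

variable {M N : Type*} [AddCommGroup M] [Module R2 M] [AddCommGroup N] [Module R2 N]

lemma OrdU_congr (e : M ≃ₗ[R2] N) : OrdU M = OrdU N := by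
  unfold OrdU
  congr 2
  ext k
  refine e.toEquiv.forall_congr fun m => ?_
  simp only [LinearEquiv.coe_toEquiv, ← LinearEquiv.map_smul, LinearEquiv.map_eq_zero_iff]

lemma OrdU_eq_one (hU : ∀ m : M, (∃ j : ℕ, UU ^ j • m = 0) → UU • m = 0)
    (hne : ∃ m : M, m ≠ 0 ∧ UU • m = 0) : OrdU M = 1 := by
  refine le_antisymm (sInf_le ⟨1, fun m hm => by simpa using hU m hm, rfl⟩) (le_sInf ?_)
  rintro _ ⟨k, hk, rfl⟩
  obtain ⟨m, hm, hUm⟩ := hne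
  have hk0 : k ≠ 0 := by
    rintro rfl
    exact hm (by simpa using hk m ⟨1, by simpa using hUm⟩)
  exact Nat.one_le_cast.mpr (Nat.one_le_iff_ne_zero.mpr hk0)

end OrdU

lemma VV_dvd_of_dvd_UU_pow_mul {j : ℕ} {q : R2} (h : VV ∣ UU ^ j * q) : VV ∣ q :=
  (MvPolynomial.X_prime.dvd_or_dvd h).resolve_left fun hU =>
    absurd (MvPolynomial.X_prime.dvd_of_dvd_pow hU) (by simp [MvPolynomial.X_dvd_X])

lemma smul_quotient_eq_zero_of_mem {R : Type*} [CommRing R] {I : Ideal R} {r : R} (hr : r ∈ I)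
    (q : R ⧸ I) : r • q = 0 := by
  obtain ⟨p, rfl⟩ := Submodule.Quotient.mk_surjective I q
  rw [← Submodule.Quotient.mk_smul, Submodule.Quotient.mk_eq_zero, smul_eq_mul]
  exact I.mul_mem_right p hr

lemma one_notMem_span_UU_VV : (1 : R2) ∉ Ideal.span {UU, VV} := by
  intro h
  have hle : Ideal.span {UU, VV} ≤ RingHom.ker (MvPolynomial.constantCoeff (R := ZMod 2)) := by
    simp [Ideal.span_le, Set.insert_subset_iff]
  simpa using hle h

lemma eq_zero_of_UU_pow_smul_eq_zero {j : ℕ} {x : R2 ⧸ Ideal.span {VV}} (h : UU ^ j • x = 0) :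
    x = 0 := by
  obtain ⟨p, rfl⟩ := Submodule.Quotient.mk_surjective _ x
  rw [← Submodule.Quotient.mk_smul, Submodule.Quotient.mk_eq_zero, Ideal.mem_span_singleton,
    smul_eq_mul] at h
  rw [Submodule.Quotient.mk_eq_zero, Ideal.mem_span_singleton]
  exact VV_dvd_of_dvd_UU_pow_mul h

lemma OrdU_quotient_prod_pi_eq_one (ι : Type*) [Nonempty ι] :
    OrdU ((R2 ⧸ Ideal.span {VV}) × (ι → R2 ⧸ Ideal.span {UU, VV})) = 1 := by
  have hU (q : ι → R2 ⧸ Ideal.span {UU, VV}) : UU • q = 0 :=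
    funext fun i => smul_quotient_eq_zero_of_mem (Ideal.subset_span (by simp)) (q i)
  refine OrdU_eq_one ?_ ⟨(0, fun _ => 1), ?_, ?_⟩
  · rintro ⟨a, q⟩ ⟨j, h⟩
    have ha : a = 0 := eq_zero_of_UU_pow_smul_eq_zero (congrArg Prod.fst h)
    rw [Prod.smul_mk, ha, hU, smul_zero]
    rfl
  · intro h
    obtain ⟨i⟩ := ‹Nonempty ι›
    have h1 : (1 : R2 ⧸ Ideal.span {UU, VV}) = 0 := congrFun (congrArg Prod.snd h) i
    exact one_notMem_span_UU_VV (Ideal.Quotient.eq_zero_iff_mem.mp h1)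
  · rw [Prod.smul_mk, smul_zero, hU]
    rfl

lemma mem_VC_iff {n : ℕ} (x : Cmod n) :
    x ∈ VC (Cmod n) ↔ VV ∣ x.1 ∧ ∀ ki, VV ∣ x.2 ki := by
  constructor
  · rintro ⟨m, rfl⟩
    exact ⟨⟨m.1, rfl⟩, fun ki => ⟨m.2 ki, rfl⟩⟩
  · rintro ⟨⟨p, hp⟩, hf⟩
    choose g hg using hf
    exact ⟨(p, g), Prod.ext hp.symm (funext fun ki => (hg ki).symm)⟩

lemma Cmod.linearMap_ext {n : ℕ} {M : Type*} [AddCommGroup M] [Module R2 M]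
    {f g : Cmod n →ₗ[R2] M} (hf : f ef = g ef) (heb : ∀ k i, f (eb k i) = g (eb k i)) :
    f = g :=
  LinearMap.prod_ext (LinearMap.ext_ring hf)
    (LinearMap.pi_ext' fun ki => LinearMap.ext_ring (heb ki.1 ki.2))

noncomputable def boxDiff (n : ℕ) : Cmod n →ₗ[R2] Cmod n where
  toFun x := (0, fun ki => ![0, UU * x.2 (ki.1, 0), VV * x.2 (ki.1, 0),
    VV * x.2 (ki.1, 1) + UU * x.2 (ki.1, 2)] ki.2)
  map_add' x y := by
    refine Prod.ext (add_zero 0).symm (funext fun ⟨k, i⟩ => ?_)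
    fin_cases i <;> simp [mul_add, add_add_add_comm]
  map_smul' c x := by
    refine Prod.ext (smul_zero c).symm (funext fun ⟨k, i⟩ => ?_)
    fin_cases i <;> simp [mul_add, mul_left_comm]

section BoxDiff

variable {n : ℕ}

@[simp]
lemma boxDiff_fst (x : Cmod n) : (boxDiff n x).1 = 0 :=
  rfl

@[simp]
lemma boxDiff_snd (x : Cmod n) (k : Fin n) (i : Fin 4) :
    (boxDiff n x).2 (k, i) = ![0, UU * x.2 (k, 0), VV * x.2 (k, 0),
      VV * x.2 (k, 1) + UU * x.2 (k, 2)] i :=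
  rfl

lemma eq_boxDiff (D : Cmod n →ₗ[R2] Cmod n)
    (hf : D ef = 0)
    (ha : ∀ k : Fin n, D (eb k 0) = UU • eb k 1 + VV • eb k 2)
    (hb : ∀ k : Fin n, D (eb k 1) = VV • eb k 3)
    (hc : ∀ k : Fin n, D (eb k 2) = UU • eb k 3)
    (hd : ∀ k : Fin n, D (eb k 3) = 0) : D = boxDiff n := by
  refine Cmod.linearMap_ext ?_ fun k i => ?_
  · rw [hf]
    refine Prod.ext rfl (funext fun ⟨k, i⟩ => ?_)
    fin_cases i <;> simp [ef]
  · fin_cases i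
    all_goals
      simp only [Fin.zero_eta, Fin.mk_one, Fin.reduceFinMk, ha, hb, hc, hd]
      refine Prod.ext (by simp [eb]) (funext fun ⟨k', i'⟩ => ?_)
      fin_cases i' <;> simp [eb, Pi.single_apply]

abbrev BoxHomology (n : ℕ) : Type :=
  (R2 ⧸ Ideal.span {VV}) × (Fin 2 × Fin n → R2 ⧸ Ideal.span {UU, VV})

-- `![1, 3]` picks the vertices `b` and `d` of a box.
noncomputable def readOff (n : ℕ) : Cmod n →ₗ[R2] BoxHomology n :=
  ((Ideal.span {VV}).mkQ ∘ₗ LinearMap.fst R2 R2 _).prod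
    (LinearMap.pi fun jk : Fin 2 × Fin n =>
      (Ideal.span {UU, VV}).mkQ ∘ₗ LinearMap.proj (jk.2, ![1, 3] jk.1) ∘ₗ LinearMap.snd R2 R2 _)

lemma readOff_apply (x : Cmod n) :
    readOff n x = (Submodule.Quotient.mk x.1,
      fun jk => Submodule.Quotient.mk (x.2 (jk.2, ![1, 3] jk.1))) :=
  rfl

lemma VC_le_ker_readOff : VC (Cmod n) ≤ LinearMap.ker (readOff n) := by
  rintro _ ⟨x, rfl⟩
  rw [LinearMap.mem_ker, LinearMap.lsmul_apply, map_smul]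
  refine Prod.ext (smul_quotient_eq_zero_of_mem (Ideal.mem_span_singleton_self _) _)
    (funext fun _ => smul_quotient_eq_zero_of_mem (Ideal.subset_span (by simp)) _)

lemma readOff_comp_boxDiff : readOff n ∘ₗ boxDiff n = 0 := by
  refine LinearMap.ext fun x => Prod.ext (by simp [readOff_apply]) (funext fun ⟨j, k⟩ => ?_)
  rw [LinearMap.comp_apply, readOff_apply, LinearMap.zero_apply]
  refine (Submodule.Quotient.mk_eq_zero _).2 (Ideal.mem_span_pair.2 ?_)
  fin_cases j
  · exact ⟨x.2 (k, 0), 0, by simp [mul_comm]⟩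
  · exact ⟨x.2 (k, 2), x.2 (k, 1), by simp [mul_comm, add_comm]⟩

lemma boxDiff_mem_VC_iff (x : Cmod n) :
    boxDiff n x ∈ VC (Cmod n) ↔ ∀ k, VV ∣ x.2 (k, 0) ∧ VV ∣ x.2 (k, 2) := by
  rw [mem_VC_iff]
  constructor
  · rintro ⟨-, h⟩ k
    have hb : VV ∣ UU ^ 1 * x.2 (k, 0) := by simpa using h (k, 1)
    have hd : VV ∣ UU ^ 1 * x.2 (k, 2) := by
      simpa using (dvd_add_right (dvd_mul_right _ _)).1 (by simpa using h (k, 3))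
    exact ⟨VV_dvd_of_dvd_UU_pow_mul hb, VV_dvd_of_dvd_UU_pow_mul hd⟩
  · refine fun h => ⟨dvd_zero _, fun ⟨k, i⟩ => ?_⟩
    fin_cases i <;> simp [Dvd.dvd.mul_left (h k).1, Dvd.dvd.mul_left (h k).2, dvd_add]

lemma exists_boxDiff_sub_mem_VC (x : Cmod n) (hx : ∀ k, VV ∣ x.2 (k, 0) ∧ VV ∣ x.2 (k, 2))
    (h0 : readOff n x = 0) : ∃ z, boxDiff n z - x ∈ VC (Cmod n) := by
  have hfree : VV ∣ x.1 :=
    Ideal.mem_span_singleton.1 ((Submodule.Quotient.mk_eq_zero _).1 (congrArg Prod.fst h0))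
  have hb (k : Fin n) : x.2 (k, 1) ∈ Ideal.span {UU, VV} :=
    (Submodule.Quotient.mk_eq_zero _).1 (congrFun (congrArg Prod.snd h0) (0, k))
  have hd (k : Fin n) : x.2 (k, 3) ∈ Ideal.span {UU, VV} :=
    (Submodule.Quotient.mk_eq_zero _).1 (congrFun (congrArg Prod.snd h0) (1, k))
  choose β β' hβ using fun k => Ideal.mem_span_pair.1 (hb k)
  choose δ δ' hδ using fun k => Ideal.mem_span_pair.1 (hd k)
  refine ⟨(0, fun ki => ![β ki.1, 0, δ ki.1, 0] ki.2), (mem_VC_iff _).2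
    ⟨by simpa using hfree, fun ⟨k, i⟩ => ?_⟩⟩
  fin_cases i
  · exact dvd_sub (dvd_zero _) (hx k).1
  · exact ⟨-β' k, show UU * β k - x.2 (k, 1) = _ by rw [← hβ k]; ring⟩
  · obtain ⟨γ, hγ⟩ := (hx k).2
    exact ⟨β k - γ, show VV * β k - x.2 (k, 2) = _ by rw [hγ]; ring⟩
  · exact ⟨-δ' k, show VV * 0 + UU * δ k - x.2 (k, 3) = _ by rw [← hδ k]; ring⟩

lemma exists_boxDiff_mem_VC_readOff_eq (t : BoxHomology n) :
    ∃ x, boxDiff n x ∈ VC (Cmod n) ∧ readOff n x = t := by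
  obtain ⟨p, hp⟩ := Submodule.Quotient.mk_surjective _ t.1
  choose g hg using fun jk => Ideal.Quotient.mk_surjective (t.2 jk)
  refine ⟨(p, fun ki => ![0, g (0, ki.1), 0, g (1, ki.1)] ki.2),
    (boxDiff_mem_VC_iff _).2 fun k => by simp, Prod.ext hp (funext fun ⟨j, k⟩ => ?_)⟩
  fin_cases j <;> simp [readOff_apply, hg]

noncomputable def boxHomologyEquiv (n : ℕ) : Hml (Dbar (boxDiff n)) ≃ₗ[R2] BoxHomology n :=
  Hml.equivOfSurjective _ (cycleReadOff _ _ VC_le_ker_readOff)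
    (cycleReadOff_surjective _ _ _ exists_boxDiff_mem_VC_readOff_eq)
    (ker_cycleReadOff _ _ _ readOff_comp_boxDiff fun x hx h0 =>
      exists_boxDiff_sub_mem_VC x ((boxDiff_mem_VC_iff x).1 hx) h0)

end BoxDiff

theorem homology_of_free_plus_unit_boxes
    (n : ℕ) (hn : 1 ≤ n)
    (D : Cmod n →ₗ[R2] Cmod n)
    (hf : D ef = 0)
    (ha : ∀ k : Fin n, D (eb k 0) = UU • eb k 1 + VV • eb k 2)
    (hb : ∀ k : Fin n, D (eb k 1) = VV • eb k 3)
    (hc : ∀ k : Fin n, D (eb k 2) = UU • eb k 3)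
    (hd : ∀ k : Fin n, D (eb k 3) = 0) :
    Nonempty (Hml (Dbar D) ≃ₗ[R2]
      (R2 ⧸ Ideal.span {VV}) × (Fin (2 * n) → R2 ⧸ Ideal.span {UU, VV})) ∧
    OrdU (Hml (Dbar D)) = 1 := by
  obtain rfl := eq_boxDiff D hf ha hb hc hd
  let e := (boxHomologyEquiv n).trans ((LinearEquiv.refl R2 _).prodCongr
    (LinearEquiv.funCongrLeft R2 (R2 ⧸ Ideal.span {UU, VV}) finProdFinEquiv.symm))
  have : Nonempty (Fin (2 * n)) := ⟨⟨0, by omega⟩⟩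
  exact ⟨⟨e⟩, (OrdU_congr e).trans (OrdU_quotient_prod_pi_eq_one _)⟩
end

section
/- Let R = F[U,V] with F = Z/2Z, and let C be a reduced finitely generated free bigraded chain complex over R with ∂² = 0, such that H_*(C/(U=0)) and H_*(C/(V=0)) are annihilated by V and U respectively (torsion order 1), after splitting off one free F[U,V] summand. Suppose x₁ is a basis element of maximal Alexander grading with ∂_V x₁ ≠ 0 where ∂_V is the induced differential on C/(U=0). Then after a change of basis, there exists a basis element x₂ with ∂_V x₁ = V x₂. -/
noncomputable abbrev SP : Type := Polynomial (ZMod 2)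

/-- Setting `U = 0`, `V = X`. -/
noncomputable def piV : R2 →+* SP :=
  (MvPolynomial.aeval ![(0 : SP), Polynomial.X]).toRingHom

/-- Setting `U = X`, `V = 0`. -/
noncomputable def piU : R2 →+* SP :=
  (MvPolynomial.aeval ![(Polynomial.X : SP), (0 : SP)]).toRingHom

/-- The induced differential `∂_V` on `C/(U=0)`, as a map on the free `F[V]`-module
`ι → F[V]` (obtained by applying `piV` entrywise to the matrix of `∂`). -/
noncomputable def dV {ι : Type*} [Fintype ι] [DecidableEq ι]
    (D : (ι → R2) →ₗ[R2] (ι → R2)) : (ι → SP) →ₗ[SP] (ι → SP) :=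
  Matrix.toLin' ((Matrix.of fun i j : ι => D (e j) i).map piV)

/-- The induced differential `∂_U` on `C/(V=0)`. -/
noncomputable def dU {ι : Type*} [Fintype ι] [DecidableEq ι]
    (D : (ι → R2) →ₗ[R2] (ι → R2)) : (ι → SP) →ₗ[SP] (ι → SP) :=
  Matrix.toLin' ((Matrix.of fun i j : ι => D (e j) i).map piU)

/-! Reducedness gives `∂_V x₁ = V • y`. The row of `∂_V` at `x₁` vanishes, because an entry `V^l`
there would push some grading above the maximum `A x₁`; with `∂_V² = 0` this makes `y` a cycle.
If some entry of `y` has a nonzero constant term, homogeneity forces that entry to be `1`, and a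
transvection makes `y` a basis vector. Otherwise `y = V • z` with `z` a cycle, so `V • z = ∂_V w`
and `x₁ - V • w` is a cycle; then `V • (x₁ - V • w)` is a boundary, and its `x₁`-coordinate
`V (1 - V w_{x₁})` would have to vanish. -/

lemma coeff_zero_apply_eq_zero_of_mem_sup_range_lsmul_X {σ R ι : Type*} [CommSemiring R]
    {s t : σ} {x : ι → MvPolynomial σ R}
    (hx : x ∈ LinearMap.range
        (LinearMap.lsmul (MvPolynomial σ R) (ι → MvPolynomial σ R) (MvPolynomial.X s)) ⊔
      LinearMap.range
        (LinearMap.lsmul (MvPolynomial σ R) (ι → MvPolynomial σ R) (MvPolynomial.X t)))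
    (j : ι) : MvPolynomial.coeff 0 (x j) = 0 := by
  obtain ⟨_, ⟨a, rfl⟩, _, ⟨b, rfl⟩, rfl⟩ := Submodule.mem_sup.mp hx
  simp [← MvPolynomial.constantCoeff_eq]

lemma exists_eq_X_smul_of_coeff_zero {R ι : Type*} [Semiring R] {v : ι → Polynomial R}
    (hv : ∀ j, (v j).coeff 0 = 0) : ∃ y, v = (Polynomial.X : Polynomial R) • y := by
  choose y hy using fun j => Polynomial.X_dvd_iff.mpr (hv j)
  exact ⟨y, funext hy⟩

lemma Polynomial.eq_C_of_support_X_mul_subsingleton {R : Type*} [Semiring R] {p : Polynomial R}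
    (hp : (↑(X * p).support : Set ℕ).Subsingleton) (h0 : p.coeff 0 ≠ 0) : p = C (p.coeff 0) := by
  ext (_ | l)
  · simp
  · rw [coeff_C, if_neg l.succ_ne_zero]
    by_contra hl
    have := @hp (l + 2) (by simpa [coeff_X_mul] using hl) 1 (by simpa [coeff_X_mul] using h0)
    omega

lemma exists_basis_pi_apply_eq_of_apply_eq_one {S ι : Type*} [CommRing S] [Finite ι]
    [DecidableEq ι] {y : ι → S} {j : ι} (hy : y j = 1) :
    ∃ b : Module.Basis ι S (ι → S), b j = y ∧ ∀ i, i ≠ j → b i = Pi.single i 1 := by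
  set w := y - Pi.single j 1
  have hw : w j = 0 := by simp [w, hy]
  let τ : S → (ι → S) →ₗ[S] (ι → S) := fun c =>
    LinearMap.id + c • (LinearMap.proj j).smulRight w
  have hτ : ∀ c d, (τ c).comp (τ d) = τ (c + d) := by
    intro c d; ext z i
    simp only [LinearMap.coe_comp, Function.comp_apply, LinearMap.add_apply, LinearMap.id_coe,
      id_eq, LinearMap.smul_apply, LinearMap.coe_smulRight, LinearMap.coe_proj, Function.eval,
      Pi.add_apply, Pi.smul_apply, hw, smul_eq_mul, mul_zero, add_zero, τ]
    ring
  have hτ0 : τ 0 = LinearMap.id := by simp [τ]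
  let φ : (ι → S) ≃ₗ[S] (ι → S) := .ofLinearMap (τ 1) (τ (-1)) (by rw [hτ, add_neg_cancel, hτ0])
    (by rw [hτ, neg_add_cancel, hτ0])
  refine ⟨(Pi.basisFun S ι).map φ, ?_, fun i hij => ?_⟩
  · simp [φ, τ, w]
  · simp [φ, τ, hij.symm]

lemma apply_single_ne_sq_smul_of_apply_eq_zero {S ι : Type*} [CommRing S] [IsDomain S]
    [DecidableEq ι] (d : (ι → S) →ₗ[S] (ι → S)) {t : S} (ht0 : t ≠ 0) (ht : ¬IsUnit t)
    (hann : ∀ z, d z = 0 → t • z ∈ LinearMap.range d) {i : ι} (hrow : ∀ x, d x i = 0)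
    {z : ι → S} (hz : d z = 0) : d (Pi.single i 1) ≠ t ^ 2 • z := by
  intro h
  obtain ⟨w, hw⟩ := hann z hz
  have hcycle : d (Pi.single i 1 - t • w) = 0 := by
    rw [map_sub, map_smul, hw, h, smul_smul, sq, sub_self]
  obtain ⟨u, hu⟩ := hann _ hcycle
  have hi : t * (1 - t * w i) = 0 := by simpa [hrow] using (congr_fun hu i).symm
  exact ht (.of_mul_eq_one (w i) (sub_eq_zero.mp ((mul_eq_zero.mp hi).resolve_left ht0)).symm)

lemma coeff_piV (p : R2) (l : ℕ) :
    (piV p).coeff l = MvPolynomial.coeff (Finsupp.single 1 l) p := by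
  induction p using MvPolynomial.induction_on' with
  | add p q hp hq => simp only [map_add, Polynomial.coeff_add, MvPolynomial.coeff_add, hp, hq]
  | monomial m c =>
    obtain ⟨a, b, rfl⟩ : ∃ a b, m = Finsupp.single 0 a + Finsupp.single 1 b :=
      ⟨m 0, m 1, by ext k; fin_cases k <;> simp⟩
    rcases a with _ | a
    · simp [piV, MvPolynomial.aeval_monomial, MvPolynomial.coeff_monomial, Polynomial.coeff_X_pow,
        (Finsupp.single_injective _).eq_iff, eq_comm]
    · have : Finsupp.single 0 (a + 1) + Finsupp.single 1 b ≠ Finsupp.single (1 : Fin 2) l :=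
        fun h => by simpa using DFunLike.congr_fun h 0
      rw [MvPolynomial.coeff_monomial, if_neg this]
      simp [piV, MvPolynomial.aeval_monomial]

lemma add_eq_of_coeff_piV_ne_zero {ι : Type*} [DecidableEq ι] {D : (ι → R2) →ₗ[R2] (ι → R2)}
    {A : ι → ℤ}
    (hgrade : ∀ (i j : ι) (k l : ℕ),
      MvPolynomial.coeff (Finsupp.single (0 : Fin 2) k + Finsupp.single (1 : Fin 2) l)
        (D (e i) j) ≠ 0 → A j - (k : ℤ) + (l : ℤ) = A i)
    {i j : ι} {l : ℕ} (hl : (piV (D (e i) j)).coeff l ≠ 0) : A j + l = A i := by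
  simpa using hgrade i j 0 l (by simpa [coeff_piV] using hl)

lemma eq_one_of_X_mul_eq_piV {ι : Type*} [DecidableEq ι] {D : (ι → R2) →ₗ[R2] (ι → R2)}
    {A : ι → ℤ} (hgr : ∀ {i j : ι} {l : ℕ}, (piV (D (e i) j)).coeff l ≠ 0 → A j + l = A i)
    {i j : ι} {p : SP} (hp : Polynomial.X * p = piV (D (e i) j)) (h0 : p.coeff 0 ≠ 0) :
    p = 1 := by
  have hhom : (↑(Polynomial.X * p).support : Set ℕ).Subsingleton := by
    intro l hl m hm
    rw [Finset.mem_coe, hp, Polynomial.mem_support_iff] at hl hm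
    have := hgr hl
    have := hgr hm
    omega
  have hZMod2 : ∀ a : ZMod 2, a ≠ 0 → a = 1 := by decide
  rw [Polynomial.eq_C_of_support_X_mul_subsingleton hhom h0, hZMod2 _ h0, map_one]

section
variable {ι : Type*} [Fintype ι] [DecidableEq ι] (D : (ι → R2) →ₗ[R2] (ι → R2))

lemma dV_eq_toLin' : dV D = Matrix.toLin' (piV.mapMatrix (LinearMap.toMatrix' D)) := rfl

lemma dV_apply (x : ι → SP) (i : ι) : dV D x i = ∑ j, piV (D (e j) i) * x j := rfl

lemma dV_single_apply (i j : ι) : dV D (Pi.single i 1) j = piV (D (e i) j) := by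
  simp [dV_apply, Pi.single_apply]

lemma dV_comp_dV (hD2 : D.comp D = 0) : (dV D).comp (dV D) = 0 := by
  rw [dV_eq_toLin', ← Matrix.toLin'_mul, ← map_mul, ← LinearMap.toMatrix'_comp, hD2, map_zero,
    map_zero, map_zero]

lemma dV_apply_eq_zero_of_forall_le (hred : ∀ i j, MvPolynomial.coeff 0 (D (e i) j) = 0)
    {A : ι → ℤ} (hgr : ∀ {i j : ι} {l : ℕ}, (piV (D (e i) j)).coeff l ≠ 0 → A j + l = A i)
    {i₁ : ι} (hmax : ∀ i, A i ≤ A i₁) (x : ι → SP) : dV D x i₁ = 0 := by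
  rw [dV_apply]
  refine Finset.sum_eq_zero fun j _ => ?_
  suffices piV (D (e j) i₁) = 0 by rw [this, zero_mul]
  ext l
  by_contra hl
  obtain rfl : l = 0 := by have := hgr hl; have := hmax j; omega
  exact hl (by simpa [coeff_piV] using hred j i₁)

end

theorem basis_change_for_dV_general
    {ι : Type*} [Fintype ι] [DecidableEq ι]
    (D : (ι → R2) →ₗ[R2] (ι → R2)) (hD2 : D.comp D = 0)
    (hreduced : ∀ i : ι, D (e i) ∈
      LinearMap.range (LinearMap.lsmul R2 (ι → R2) UU) ⊔
      LinearMap.range (LinearMap.lsmul R2 (ι → R2) VV))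
    (A : ι → ℤ)
    (hgrade : ∀ (i j : ι) (k l : ℕ),
      MvPolynomial.coeff (Finsupp.single (0 : Fin 2) k + Finsupp.single (1 : Fin 2) l)
        (D (e i) j) ≠ 0 → A j - (k : ℤ) + (l : ℤ) = A i)
    (hannV : ∀ z : ι → SP, dV D z = 0 →
      (Polynomial.X : SP) • z ∈ LinearMap.range (dV D))
    (i1 : ι) (hmax : ∀ i : ι, A i ≤ A i1) :
    ∃ (b' : Module.Basis ι SP (ι → SP)) (i2 : ι),
      b' i1 = Pi.single i1 1 ∧
      dV D (Pi.single i1 1) = (Polynomial.X : SP) • b' i2 := by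
  have hred i j := coeff_zero_apply_eq_zero_of_mem_sup_range_lsmul_X (hreduced i) j
  have hgr {i j l} := @add_eq_of_coeff_piV_ne_zero _ _ D A hgrade i j l
  have hrow := dV_apply_eq_zero_of_forall_le D hred hgr hmax
  obtain ⟨y, hvy⟩ := exists_eq_X_smul_of_coeff_zero (v := dV D (Pi.single i1 1)) fun j => by
    simpa [dV_single_apply, coeff_piV] using hred i1 j
  have hy : dV D y = 0 := (smul_eq_zero_iff_right Polynomial.X_ne_zero).mp <| by
    rw [← map_smul, ← hvy, ← LinearMap.comp_apply, dV_comp_dV D hD2, LinearMap.zero_apply]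
  by_cases hdvd : ∀ j, (y j).coeff 0 = 0
  · obtain ⟨z, rfl⟩ := exists_eq_X_smul_of_coeff_zero hdvd
    have hz : dV D z = 0 := (smul_eq_zero_iff_right Polynomial.X_ne_zero).mp <| by
      rw [← map_smul, hy]
    have hv : dV D (Pi.single i1 1) = (Polynomial.X : SP) ^ 2 • z := by rw [hvy, smul_smul, sq]
    exact absurd hv (apply_single_ne_sq_smul_of_apply_eq_zero _
      Polynomial.X_ne_zero Polynomial.not_isUnit_X hannV hrow hz)
  · obtain ⟨j₀, hj₀⟩ := not_forall.mp hdvd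
    have hyj₀ : y j₀ = 1 :=
      eq_one_of_X_mul_eq_piV hgr (by rw [← dV_single_apply, hvy]; rfl) hj₀
    have hne : i1 ≠ j₀ := by
      rintro rfl
      have := hrow (Pi.single i1 1)
      rw [hvy, Pi.smul_apply, hyj₀, smul_eq_mul, mul_one] at this
      exact Polynomial.X_ne_zero this
    obtain ⟨b, hbj₀, hb⟩ := exists_basis_pi_apply_eq_of_apply_eq_one hyj₀
    exact ⟨b, j₀, hb i1 hne, hbj₀ ▸ hvy⟩

theorem basis_change_for_dV
    {ι : Type*} [Fintype ι] [DecidableEq ι]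
    (D : (ι → R2) →ₗ[R2] (ι → R2)) (hD2 : D.comp D = 0)
    (hreduced : ∀ i : ι, D (e i) ∈
      LinearMap.range (LinearMap.lsmul R2 (ι → R2) UU) ⊔
      LinearMap.range (LinearMap.lsmul R2 (ι → R2) VV))
    (A : ι → ℤ)
    (hgrade : ∀ (i j : ι) (k l : ℕ),
      MvPolynomial.coeff (Finsupp.single (0 : Fin 2) k + Finsupp.single (1 : Fin 2) l)
        (D (e i) j) ≠ 0 → A j - (k : ℤ) + (l : ℤ) = A i)
    (hannV : ∀ z : ι → SP, dV D z = 0 →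
      (Polynomial.X : SP) • z ∈ LinearMap.range (dV D))
    (hannU : ∀ z : ι → SP, dU D z = 0 →
      (Polynomial.X : SP) • z ∈ LinearMap.range (dU D))
    (i1 : ι) (hmax : ∀ i : ι, A i ≤ A i1)
    (hne : dV D (Pi.single i1 1) ≠ 0) :
    ∃ (b' : Module.Basis ι SP (ι → SP)) (i2 : ι),
      b' i1 = Pi.single i1 1 ∧
      dV D (Pi.single i1 1) = (Polynomial.X : SP) • b' i2 :=
  basis_change_for_dV_general D hD2 hreduced A hgrade hannV i1 hmax
end
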